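/- Let b̂ be an entire function and C, β > 0 constants such that |b̂(ζ)| ≤ C e^{β|ζ|} for all ζ ∈ ℂ. Then the series K(ξ,ζ) := Σ_{k≥1} ((−ξ)^k/k!) b̂^{*k}(ζ−ξ) converges locally uniformly on ℂ×ℂ and defines a holomorphic function of (ξ,ζ) on ℂ×ℂ; moreover, for every μ > 0 one has |K(ξ,ζ)| ≤ C|ξ| e^{μ|ξ| + (C/μ + β)|ζ−ξ|} for all (ξ,ζ) ∈ ℂ×ℂ. -/

import Mathlib

/-!
By induction, `‖b^{*(k+1)}(z)‖ ≤ C^{k+1} ‖z‖^k / k! · e^{β‖z‖}`: along the segment the exponentials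
multiply to `e^{β‖z‖}`, and integrating `(1-t)^k` contributes the factor `‖z‖ / (k+1)`. The `k`-th
term of the kernel is therefore at most `C‖ξ‖ e^{β‖z‖} (C‖ξ‖‖z‖)^k / (k!)²`; writing
`C‖ξ‖‖z‖ = (μ‖ξ‖)(C‖z‖/μ)` and bounding `(C‖z‖/μ)^k / k!` by `e^{C‖z‖/μ}` leaves the exponential
series in `μ‖ξ‖`, which gives the estimate. The same bounds are uniform on balls, so the series
converges locally uniformly, and holomorphy follows by termwise differentiation, the derivatives
being controlled by Cauchy estimates on slightly larger balls.
-/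

open Finset
open scoped Real

noncomputable section

/-- Convolution `(f*g)(ζ) := ∫₀^ζ f(ζ-ξ) g(ξ) dξ`, the integral being taken along
the line segment `[0,ζ]`, parametrised by `ξ = tζ`, `t ∈ [0,1]`. -/
def conv (f g : ℂ → ℂ) (ζ : ℂ) : ℂ :=
  ζ * ∫ t in (0:ℝ)..1, f (ζ - (t : ℂ) * ζ) * g ((t : ℂ) * ζ)

/-- Iterated convolution powers: `convIter f k = f^{*(k+1)}`, i.e.
`convIter f 0 = f^{*1} = f` and `convIter f (k+1) = f^{*(k+1)} * f`. -/
def convIter (f : ℂ → ℂ) : ℕ → ℂ → ℂ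
  | 0 => f
  | k + 1 => conv (convIter f k) f

/-- The kernel `K(ξ,ζ) := Σ_{k≥1} ((-ξ)^k / k!) f^{*k}(ζ-ξ)`. -/
def Kker (f : ℂ → ℂ) (ξ ζ : ℂ) : ℂ :=
  ∑' k : ℕ, ((-ξ) ^ (k + 1) / (Nat.factorial (k + 1) : ℂ)) * convIter f k (ζ - ξ)

open Filter ContinuousLinearMap
open scoped Nat

theorem hasDerivAt_intervalIntegral_of_continuous {𝕜 E : Type*} [RCLike 𝕜]
    [NormedAddCommGroup E] [NormedSpace ℝ E] [NormedSpace 𝕜 E] {F F' : 𝕜 → ℝ → E}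
    (hF : Continuous (Function.uncurry F)) (hF' : Continuous (Function.uncurry F'))
    (hderiv : ∀ x t, HasDerivAt (F · t) (F' x t) x) (a b : ℝ) (x₀ : 𝕜) :
    HasDerivAt (fun x => ∫ t in a..b, F x t) (∫ t in a..b, F' x₀ t) x₀ := by
  obtain ⟨M, hM⟩ := IsCompact.exists_bound_of_continuousOn
    ((isCompact_closedBall x₀ 1).prod (isCompact_uIcc (a := a) (b := b))) hF'.continuousOn
  have hslice : ∀ {G : 𝕜 → ℝ → E}, Continuous (Function.uncurry G) → ∀ x, Continuous (G x) :=
    fun hG x => hG.comp (Continuous.prodMk_right x)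
  refine (intervalIntegral.hasDerivAt_integral_of_dominated_loc_of_deriv_le (bound := fun _ => M)
    (Metric.ball_mem_nhds x₀ one_pos)
    (Eventually.of_forall fun x => (hslice hF x).aestronglyMeasurable)
    ((hslice hF x₀).intervalIntegrable _ _) (hslice hF' x₀).aestronglyMeasurable ?_
    intervalIntegrable_const (Eventually.of_forall fun t _ x _ => hderiv x t)).2
  exact Eventually.of_forall fun t ht x hx =>
    hM (x, t) ⟨Metric.ball_subset_closedBall hx, Set.uIoc_subset_uIcc ht⟩

theorem differentiable_conv {f g : ℂ → ℂ} (hf : Differentiable ℂ f) (hg : Differentiable ℂ g) :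
    Differentiable ℂ (conv f g) := by
  have hf' : Continuous (deriv f) := hf.contDiff.continuous_deriv le_rfl
  have hg' : Continuous (deriv g) := hg.contDiff.continuous_deriv le_rfl
  have hfc := hf.continuous
  have hgc := hg.continuous
  intro ζ₀
  refine differentiableAt_id.mul (hasDerivAt_intervalIntegral_of_continuous
    (F' := fun ζ t =>
      deriv f (ζ - t * ζ) * (1 - t) * g (t * ζ) + f (ζ - t * ζ) * (deriv g (t * ζ) * t))
    (by fun_prop) (by fun_prop) (fun ζ t => ?_) 0 1 ζ₀).differentiableAt
  have hlin : HasDerivAt (fun w : ℂ => t * w) t ζ := by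
    simpa using (hasDerivAt_id' ζ).const_mul (t : ℂ)
  exact ((hf _).hasDerivAt.comp ζ ((hasDerivAt_id' ζ).fun_sub hlin)).mul
    ((hg _).hasDerivAt.comp ζ hlin)

theorem differentiable_convIter {f : ℂ → ℂ} (hf : Differentiable ℂ f) :
    ∀ k, Differentiable ℂ (convIter f k)
  | 0 => hf
  | k + 1 => differentiable_conv (differentiable_convIter hf k) hf

theorem norm_conv_le {f g : ℂ → ℂ} {A B β : ℝ} {k : ℕ}
    (hf : ∀ w, ‖f w‖ ≤ A * ‖w‖ ^ k * Real.exp (β * ‖w‖))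
    (hg : ∀ w, ‖g w‖ ≤ B * Real.exp (β * ‖w‖)) (z : ℂ) :
    ‖conv f g z‖ ≤ A * B * ‖z‖ ^ (k + 1) / (k + 1) * Real.exp (β * ‖z‖) := by
  set D := A * B * ‖z‖ ^ k * Real.exp (β * ‖z‖)
  have hpoint : ∀ t ∈ Set.Ioc (0 : ℝ) 1,
      ‖f (z - t * z) * g (t * z)‖ ≤ D * (1 - t) ^ k := by
    rintro t ⟨ht₀, ht₁⟩
    have hleft : ‖z - t * z‖ = (1 - t) * ‖z‖ := by
      rw [← one_sub_mul, norm_mul, ← Complex.ofReal_one, ← Complex.ofReal_sub, Complex.norm_real,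
        Real.norm_of_nonneg (by linarith)]
    have hright : ‖(t : ℂ) * z‖ = t * ‖z‖ := by
      rw [norm_mul, Complex.norm_real, Real.norm_of_nonneg ht₀.le]
    have hexp : Real.exp (β * ((1 - t) * ‖z‖)) * Real.exp (β * (t * ‖z‖)) =
        Real.exp (β * ‖z‖) := by
      rw [← Real.exp_add]; ring_nf
    rw [norm_mul]
    refine (mul_le_mul (hf _) (hg _) (norm_nonneg _) ((norm_nonneg _).trans (hf _))).trans_eq ?_
    rw [hleft, hright, mul_pow]
    linear_combination (A * B * (1 - t) ^ k * ‖z‖ ^ k) * hexp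
  have hint : ∫ t in (0 : ℝ)..1, D * (1 - t) ^ k = D / (k + 1) := by
    simp [intervalIntegral.integral_comp_sub_left (fun t : ℝ => t ^ k), div_eq_mul_inv]
  calc ‖conv f g z‖ = ‖z‖ * ‖∫ t in (0 : ℝ)..1, f (z - t * z) * g (t * z)‖ := norm_mul _ _
    _ ≤ ‖z‖ * (D / (k + 1)) := by
      gcongr
      rw [← hint]
      exact intervalIntegral.norm_integral_le_of_norm_le zero_le_one
        (Eventually.of_forall hpoint) (Continuous.intervalIntegrable (by fun_prop) _ _)
    _ = A * B * ‖z‖ ^ (k + 1) / (k + 1) * Real.exp (β * ‖z‖) := by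
      simp only [D]; ring

theorem norm_convIter_le {b : ℂ → ℂ} {C β : ℝ}
    (hbd : ∀ ζ : ℂ, ‖b ζ‖ ≤ C * Real.exp (β * ‖ζ‖)) (k : ℕ) (z : ℂ) :
    ‖convIter b k z‖ ≤ C ^ (k + 1) / k ! * ‖z‖ ^ k * Real.exp (β * ‖z‖) := by
  induction k generalizing z with
  | zero => simpa [convIter] using hbd z
  | succ k ih =>
    refine (norm_conv_le ih hbd z).trans_eq ?_
    rw [Nat.factorial_succ]
    push_cast
    field_simp
    ring

theorem nonneg_of_forall_norm_le_mul_exp {b : ℂ → ℂ} {C β : ℝ}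
    (hbd : ∀ ζ : ℂ, ‖b ζ‖ ≤ C * Real.exp (β * ‖ζ‖)) : 0 ≤ C :=
  nonneg_of_mul_nonneg_left ((norm_nonneg _).trans (hbd 0)) (Real.exp_pos _)

theorem norm_kernel_term_le {b : ℂ → ℂ} {C β μ : ℝ}
    (hbd : ∀ ζ : ℂ, ‖b ζ‖ ≤ C * Real.exp (β * ‖ζ‖)) (hμ : 0 < μ) (k : ℕ) (ξ z : ℂ) :
    ‖(-ξ) ^ (k + 1) / ((k + 1)! : ℂ) * convIter b k z‖ ≤
      C * ‖ξ‖ * Real.exp ((C / μ + β) * ‖z‖) * ((μ * ‖ξ‖) ^ k / k !) := by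
  have hC := nonneg_of_forall_norm_le_mul_exp hbd
  have hfact : (k ! : ℝ) ≤ (k + 1)! := by exact_mod_cast Nat.factorial_le k.le_succ
  have hexp := Real.pow_div_factorial_le_exp (x := C / μ * ‖z‖) (by positivity) k
  calc ‖(-ξ) ^ (k + 1) / ((k + 1)! : ℂ) * convIter b k z‖
      = ‖ξ‖ ^ (k + 1) / (k + 1)! * ‖convIter b k z‖ := by
        rw [norm_mul, norm_div, norm_pow, norm_neg, Complex.norm_natCast]
    _ ≤ ‖ξ‖ ^ (k + 1) / k ! * (C ^ (k + 1) / k ! * ‖z‖ ^ k * Real.exp (β * ‖z‖)) := by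
        gcongr
        exact norm_convIter_le hbd k z
    _ = C * ‖ξ‖ * Real.exp (β * ‖z‖) * ((μ * ‖ξ‖) ^ k / k !) * ((C / μ * ‖z‖) ^ k / k !) := by
        rw [div_mul_eq_mul_div C μ, div_pow]
        field_simp
        ring
    _ ≤ C * ‖ξ‖ * Real.exp (β * ‖z‖) * ((μ * ‖ξ‖) ^ k / k !) * Real.exp (C / μ * ‖z‖) := by
        gcongr
    _ = C * ‖ξ‖ * Real.exp ((C / μ + β) * ‖z‖) * ((μ * ‖ξ‖) ^ k / k !) := by
        rw [add_mul, Real.exp_add]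
        ring

theorem norm_Kker_le {b : ℂ → ℂ} {C β μ : ℝ}
    (hbd : ∀ ζ : ℂ, ‖b ζ‖ ≤ C * Real.exp (β * ‖ζ‖)) (hμ : 0 < μ) (ξ ζ : ℂ) :
    ‖Kker b ξ ζ‖ ≤ C * ‖ξ‖ * Real.exp (μ * ‖ξ‖ + (C / μ + β) * ‖ζ - ξ‖) := by
  have hexp : HasSum (fun k => (μ * ‖ξ‖) ^ k / k !) (Real.exp (μ * ‖ξ‖)) := by
    rw [Real.exp_eq_exp_ℝ]
    exact NormedSpace.expSeries_div_hasSum_exp _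
  refine (tsum_of_norm_bounded (hexp.mul_left _) (norm_kernel_term_le hbd hμ · ξ _)).trans_eq ?_
  rw [Real.exp_add]
  ring

def HasSummableBoundOnBalls {E F : Type*} [Norm E] [Norm F] (f : ℕ → E → F) : Prop :=
  ∀ R : ℝ, ∃ u : ℕ → ℝ, Summable u ∧ ∀ k x, ‖x‖ ≤ R → ‖f k x‖ ≤ u k

namespace HasSummableBoundOnBalls

variable {E F : Type*} [SeminormedAddCommGroup E] [NormedAddCommGroup F] [CompleteSpace F]
  {f : ℕ → E → F}

theorem summable (h : HasSummableBoundOnBalls f) (x : E) : Summable (f · x) := by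
  obtain ⟨u, hu, hf⟩ := h ‖x‖
  exact hu.of_norm_bounded fun k => hf k x le_rfl

theorem tendstoLocallyUniformly (h : HasSummableBoundOnBalls f) :
    TendstoLocallyUniformly (fun N x => ∑ k ∈ range N, f k x) (fun x => ∑' k, f k x) atTop := by
  intro U hU x
  obtain ⟨u, hu, hf⟩ := h (‖x‖ + 1)
  refine ⟨Metric.closedBall x 1, Metric.closedBall_mem_nhds x one_pos,
    tendstoUniformlyOn_tsum_nat hu (fun k y hy => hf k y ?_) U hU⟩
  calc ‖y‖ ≤ ‖x‖ + ‖y - x‖ := norm_le_norm_add_norm_sub' y x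
    _ ≤ ‖x‖ + 1 := by gcongr; exact mem_closedBall_iff_norm.1 hy

end HasSummableBoundOnBalls

theorem norm_deriv_le_of_forall_mem_sphere_norm_le {f : ℂ → ℂ} (hf : Differentiable ℂ f)
    {z : ℂ} {M : ℝ} (h : ∀ w ∈ Metric.sphere z 1, ‖f w‖ ≤ M) : ‖deriv f z‖ ≤ M := by
  simpa using Complex.norm_deriv_le_of_forall_mem_sphere_norm_le one_pos hf.diffContOnCl h

theorem differentiable_tsum_mul {a g : ℕ → ℂ → ℂ} (ha : ∀ k, Differentiable ℂ (a k))
    (hg : ∀ k, Differentiable ℂ (g k))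
    (h : HasSummableBoundOnBalls fun k (p : ℂ × ℂ) => a k p.1 * g k p.2) :
    Differentiable ℂ fun p : ℂ × ℂ => ∑' k, a k p.1 * g k p.2 := by
  intro x
  obtain ⟨u, hu, hbound⟩ := h (‖x‖ + 2)
  -- Cauchy estimates on unit circles: the majorant on the ball of radius `‖x‖ + 2` bounds the
  -- derivatives of the terms on the ball of radius `‖x‖ + 1`.
  have hsphere : ∀ p : ℂ × ℂ, ‖p‖ < ‖x‖ + 1 → ∀ w : ℂ × ℂ, ‖w.1 - p.1‖ ≤ 1 → ‖w.2 - p.2‖ ≤ 1 →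
      ‖w‖ ≤ ‖x‖ + 2 := by
    intro p hp w h₁ h₂
    refine norm_prod_le_iff.2 ⟨?_, ?_⟩
    · linarith [norm_le_norm_add_norm_sub' w.1 p.1, norm_fst_le p]
    · linarith [norm_le_norm_add_norm_sub' w.2 p.2, norm_snd_le p]
  have hda : ∀ k (p : ℂ × ℂ), ‖p‖ < ‖x‖ + 1 → ‖deriv (a k) p.1 * g k p.2‖ ≤ u k := by
    intro k p hp
    rw [← deriv_mul_const (ha k _)]
    refine norm_deriv_le_of_forall_mem_sphere_norm_le ((ha k).mul_const _) fun w hw =>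
      hbound k (w, p.2) (hsphere p hp _ ?_ (by simp))
    simp [← dist_eq_norm, Metric.mem_sphere.1 hw]
  have hdg : ∀ k (p : ℂ × ℂ), ‖p‖ < ‖x‖ + 1 → ‖a k p.1 * deriv (g k) p.2‖ ≤ u k := by
    intro k p hp
    rw [← deriv_const_mul _ (hg k _)]
    refine norm_deriv_le_of_forall_mem_sphere_norm_le ((hg k).const_mul _) fun w hw =>
      hbound k (p.1, w) (hsphere p hp _ (by simp) ?_)
    simp [← dist_eq_norm, Metric.mem_sphere.1 hw]
  have hderiv : ∀ k (p : ℂ × ℂ), HasFDerivAt (fun p : ℂ × ℂ => a k p.1 * g k p.2)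
      (a k p.1 • deriv (g k) p.2 • snd ℂ ℂ ℂ + g k p.2 • deriv (a k) p.1 • fst ℂ ℂ ℂ) p :=
    fun k p => ((ha k p.1).hasDerivAt.comp_hasFDerivAt p hasFDerivAt_fst).mul
      ((hg k p.2).hasDerivAt.comp_hasFDerivAt p hasFDerivAt_snd)
  have hderiv_le : ∀ k (p : ℂ × ℂ), ‖p‖ < ‖x‖ + 1 →
      ‖a k p.1 • deriv (g k) p.2 • snd ℂ ℂ ℂ + g k p.2 • deriv (a k) p.1 • fst ℂ ℂ ℂ‖ ≤
        2 * u k := by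
    intro k p hp
    rw [smul_smul, smul_smul, two_mul]
    refine (norm_add_le _ _).trans (add_le_add ?_ ?_) <;> rw [norm_smul]
    · exact (mul_le_of_le_one_right (norm_nonneg _) (norm_snd_le ℂ ℂ ℂ)).trans (hdg k p hp)
    · rw [mul_comm (g k p.2)]
      exact (mul_le_of_le_one_right (norm_nonneg _) (norm_fst_le ℂ ℂ ℂ)).trans (hda k p hp)
  exact (hasFDerivAt_tsum_of_isPreconnected (hu.mul_left 2) Metric.isOpen_ball
    (convex_ball 0 _).isPreconnected (fun k p _ => hderiv k p)
    (fun k p hp => hderiv_le k p (mem_ball_zero_iff.1 hp)) (mem_ball_zero_iff.2 (lt_add_one _))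
    (h.summable x) (mem_ball_zero_iff.2 (lt_add_one _))).differentiableAt

theorem hasSummableBoundOnBalls_kernel {b : ℂ → ℂ} {C β : ℝ}
    (hbd : ∀ ζ : ℂ, ‖b ζ‖ ≤ C * Real.exp (β * ‖ζ‖)) :
    HasSummableBoundOnBalls fun k (p : ℂ × ℂ) =>
      (-p.1) ^ (k + 1) / ((k + 1)! : ℂ) * convIter b k p.2 := by
  intro R
  have hC := nonneg_of_forall_norm_le_mul_exp hbd
  refine ⟨fun k => C * R * Real.exp ((C + |β|) * R) * (R ^ k / k !),
    (Real.summable_pow_div_factorial R).mul_left _, fun k p hp => ?_⟩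
  have hR : 0 ≤ R := (norm_nonneg p).trans hp
  have h₁ : ‖p.1‖ ≤ R := (norm_fst_le p).trans hp
  have h₂ : ‖p.2‖ ≤ R := (norm_snd_le p).trans hp
  refine (norm_kernel_term_le hbd one_pos k p.1 p.2).trans ?_
  rw [div_one, one_mul]
  dsimp only
  gcongr
  exact le_abs_self β

theorem statement6_general (b : ℂ → ℂ) (hb : Differentiable ℂ b)
    (C β : ℝ)
    (hbd : ∀ ζ : ℂ, ‖b ζ‖ ≤ C * Real.exp (β * ‖ζ‖)) :
    (∀ ξ ζ : ℂ, Summable fun k : ℕ =>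
      ((-ξ) ^ (k + 1) / (Nat.factorial (k + 1) : ℂ)) * convIter b k (ζ - ξ)) ∧
    TendstoLocallyUniformly
      (fun N : ℕ => fun p : ℂ × ℂ => ∑ k ∈ Finset.range N,
        ((-p.1) ^ (k + 1) / (Nat.factorial (k + 1) : ℂ)) * convIter b k (p.2 - p.1))
      (fun p : ℂ × ℂ => Kker b p.1 p.2) Filter.atTop ∧
    Differentiable ℂ (fun p : ℂ × ℂ => Kker b p.1 p.2) ∧
    (∀ μ : ℝ, 0 < μ → ∀ ξ ζ : ℂ,
      ‖Kker b ξ ζ‖ ≤ C * ‖ξ‖ * Real.exp (μ * ‖ξ‖ + (C / μ + β) * ‖ζ - ξ‖)) := by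
  have hdom := hasSummableBoundOnBalls_kernel hbd
  have hdiff := differentiable_tsum_mul (a := fun k ξ => (-ξ) ^ (k + 1) / ((k + 1)! : ℂ))
    (fun k => by fun_prop) (differentiable_convIter hb) hdom
  -- `Kker b ξ ζ` is the two-variable series above, evaluated at `Φ (ξ, ζ) = (ξ, ζ - ξ)`
  let Φ : ℂ × ℂ →L[ℂ] ℂ × ℂ := (fst ℂ ℂ ℂ).prod (snd ℂ ℂ ℂ - fst ℂ ℂ ℂ)
  exact ⟨fun ξ ζ => hdom.summable (ξ, ζ - ξ), hdom.tendstoLocallyUniformly.comp Φ Φ.continuous,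
    hdiff.comp Φ.differentiable, fun μ hμ => norm_Kker_le hbd hμ⟩

/-- if `b̂` is entire with `|b̂(ζ)| ≤ C e^{β|ζ|}`, then the series
`K(ξ,ζ) := Σ_{k≥1} ((-ξ)^k/k!) b̂^{*k}(ζ-ξ)` converges (pointwise and locally
uniformly on `ℂ×ℂ`), defines a holomorphic function on `ℂ×ℂ`, and for every
`μ > 0` one has `|K(ξ,ζ)| ≤ C|ξ| e^{μ|ξ| + (C/μ + β)|ζ-ξ|}`. -/
theorem statement6 (b : ℂ → ℂ) (hb : Differentiable ℂ b)
    (C β : ℝ) (hC : 0 < C) (hβ : 0 < β)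
    (hbd : ∀ ζ : ℂ, ‖b ζ‖ ≤ C * Real.exp (β * ‖ζ‖)) :
    (∀ ξ ζ : ℂ, Summable fun k : ℕ =>
      ((-ξ) ^ (k + 1) / (Nat.factorial (k + 1) : ℂ)) * convIter b k (ζ - ξ)) ∧
    TendstoLocallyUniformly
      (fun N : ℕ => fun p : ℂ × ℂ => ∑ k ∈ Finset.range N,
        ((-p.1) ^ (k + 1) / (Nat.factorial (k + 1) : ℂ)) * convIter b k (p.2 - p.1))
      (fun p : ℂ × ℂ => Kker b p.1 p.2) Filter.atTop ∧
    Differentiable ℂ (fun p : ℂ × ℂ => Kker b p.1 p.2) ∧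
    (∀ μ : ℝ, 0 < μ → ∀ ξ ζ : ℂ,
      ‖Kker b ξ ζ‖ ≤ C * ‖ξ‖ * Real.exp (μ * ‖ξ‖ + (C / μ + β) * ‖ζ - ξ‖)) :=
  statement6_general b hb C β hbd
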